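/- arXiv:1607.00658 — 2 statements merged into one kernel-verified Lean document; each statement's English description precedes it below -/
import Mathlib

section
/- Let G be a connected graph and C the vertex set of a block of G such that G[C] is a cycle. If R is a connected zero forcing set of G and the vertices of C excluded from R form a segment of C, then this segment contains at most two cut vertices of G, each of which has exactly two components in G − v, one of which is a pendant path attached to v. -/
/-- A vertex is (eventually) forced, starting from the initially colored set `S`,
under the zero forcing color change rule: a colored vertex all of whose other
neighbors are colored forces its remaining neighbor. -/
inductive SimpleGraph.Forced {V : Type*} (G : SimpleGraph V) (S : Set V) : V → Prop
  | init (v : V) (hv : v ∈ S) : SimpleGraph.Forced G S v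
  | force (u v : V) (hu : SimpleGraph.Forced G S u) (huv : G.Adj u v)
      (hrest : ∀ w, G.Adj u w → w ≠ v → SimpleGraph.Forced G S w) :
      SimpleGraph.Forced G S v

/-- `S` is a zero forcing set of `G`. -/
def SimpleGraph.IsZeroForcingSet {V : Type*} (G : SimpleGraph V) (S : Set V) : Prop :=
  ∀ v, G.Forced S v

/-- `S` is a connected zero forcing set of `G`. -/
def SimpleGraph.IsConnectedZFS {V : Type*} (G : SimpleGraph V) (S : Set V) : Prop :=
  G.IsZeroForcingSet S ∧ (G.induce S).Connected

/-- The zero forcing number `Z(G)`. -/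
noncomputable def SimpleGraph.zfNumber {V : Type*} (G : SimpleGraph V) : ℕ :=
  sInf {n | ∃ S : Set V, G.IsZeroForcingSet S ∧ S.ncard = n}

/-- The connected zero forcing number `Z_c(G)`. -/
noncomputable def SimpleGraph.czfNumber {V : Type*} (G : SimpleGraph V) : ℕ :=
  sInf {n | ∃ S : Set V, G.IsConnectedZFS S ∧ S.ncard = n}

/-- `P` is (the vertex set of) a connected component of `G − X`. -/
def SimpleGraph.IsCompOfDel {V : Type*} (G : SimpleGraph V) (X P : Set V) : Prop :=
  P.Nonempty ∧ Disjoint P X ∧ (G.induce P).Connected ∧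
    ∀ u ∈ P, ∀ w, G.Adj u w → w ∉ X → w ∈ P

/-- The induced subgraph `G[P]` is a path graph. -/
def SimpleGraph.IsPathGraphOn {V : Type*} (G : SimpleGraph V) (P : Set V) : Prop :=
  P.Nonempty ∧ (G.induce P).Connected ∧
    (∀ v ∈ P, (G.neighborSet v ∩ P).ncard ≤ 2) ∧
    ∃ v ∈ P, (G.neighborSet v ∩ P).ncard ≤ 1

/-- `P` is a pendant path attached to `v`: a path component of `G − v`,
one of whose ends (a base) is adjacent to `v`. -/
def SimpleGraph.IsPendantPath {V : Type*} (G : SimpleGraph V) (v : V) (P : Set V) : Prop :=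
  G.IsCompOfDel {v} P ∧ G.IsPathGraphOn P ∧
    ∃ b ∈ P, G.Adj v b ∧ (G.neighborSet b ∩ P).ncard ≤ 1

/-- `v` is a cut vertex of `G`. -/
def SimpleGraph.IsCutVertex {V : Type*} (G : SimpleGraph V) (v : V) : Prop :=
  ¬ (G.induce {v}ᶜ).Connected

/-- `G[B]` is connected and has no cut vertices. -/
def SimpleGraph.IsBiconnectedSet {V : Type*} (G : SimpleGraph V) (B : Set V) : Prop :=
  (G.induce B).Connected ∧
    ∀ v ∈ B, (B \ {v}).Nonempty → (G.induce (B \ {v})).Connected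

/-- `B` is (the vertex set of) a block of `G`: a maximal subgraph with no cut vertices. -/
def SimpleGraph.IsBlock {V : Type*} (G : SimpleGraph V) (B : Set V) : Prop :=
  G.IsBiconnectedSet B ∧ ∀ B', B ⊆ B' → G.IsBiconnectedSet B' → B' = B

/-- The induced subgraph `G[C]` is a cycle. -/
def SimpleGraph.IsCycleGraphOn {V : Type*} (G : SimpleGraph V) (C : Set V) : Prop :=
  3 ≤ C.ncard ∧ (G.induce C).Connected ∧ ∀ v ∈ C, (G.neighborSet v ∩ C).ncard = 2

/-- `D` is a (possibly empty) segment of the cycle `G[C]`: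
a proper set of consecutive vertices along the cycle. -/
def SimpleGraph.IsSegmentOf {V : Type*} (G : SimpleGraph V) (C D : Set V) : Prop :=
  D ⊆ C ∧ (D = ∅ ∨ ((G.induce D).Connected ∧ D ≠ C))

/-- The minimum degree of the induced subgraph `G[B]`. -/
noncomputable def SimpleGraph.minDegOn {V : Type*} (G : SimpleGraph V) (B : Set V) : ℕ :=
  sInf ((fun v => (G.neighborSet v ∩ B).ncard) '' B)

/-- `G − v` has at least three connected components. -/
def SimpleGraph.DelHasThreeComps {V : Type*} (G : SimpleGraph V) (v : V) : Prop :=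
  ∃ P₁ P₂ P₃ : Set V, G.IsCompOfDel {v} P₁ ∧ G.IsCompOfDel {v} P₂ ∧ G.IsCompOfDel {v} P₃ ∧
    Disjoint P₁ P₂ ∧ Disjoint P₁ P₃ ∧ Disjoint P₂ P₃

/-- `G − v` has exactly two connected components. -/
def SimpleGraph.DelHasTwoComps {V : Type*} (G : SimpleGraph V) (v : V) : Prop :=
  ∃ P₁ P₂ : Set V, G.IsCompOfDel {v} P₁ ∧ G.IsCompOfDel {v} P₂ ∧
    Disjoint P₁ P₂ ∧ P₁ ∪ P₂ = {v}ᶜ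



/-!
Let `v ∉ R` be a cut vertex. The connected set `R` lies in one component `Q` of `G - v`, so the
rest `P` of `G - v` is nonempty and contains no vertex of `R`; the vertex of `P` forced first is
forced by `v`, and every other vertex of `P` is forced from inside `P`. Forcing is injective
and a vertex forces only once all its other neighbours are colored, so the vertices of `P` are
forced one after another along a chain without chords: `P` is a pendant path.

For `v` in the segment `C \ R`: since `C` is a block, `C \ {v}` lies in `Q`, and a neighbour
of `v` outside `C` lies in `P`, hence is colored after `v`. Thus every vertex of the segment is
forced by one of its two neighbours on the cycle, while a cut vertex of the segment forces into
its pendant path. Going along the segment the direction of forcing cannot turn back, so two cut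
vertices of the segment are adjacent; three pairwise adjacent vertices of a cycle would make up
the whole cycle.
-/

namespace SimpleGraph

variable {V : Type*} (G : SimpleGraph V)

section WalksInSets

lemma connected_induce_of_forall_walk {s : Set V} {u : V} (hu : u ∈ s)
    (h : ∀ v ∈ s, ∃ p : G.Walk u v, ∀ z ∈ p.support, z ∈ s) : (G.induce s).Connected :=
  (connected_iff_exists_forall_reachable _).2 ⟨⟨u, hu⟩, fun ⟨v, hv⟩ =>
    let ⟨p, hp⟩ := h v hv
    ⟨p.induce s hp⟩⟩

lemma exists_walk_of_connected_induce {s : Set V} (hs : (G.induce s).Connected) {a b : V}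
    (ha : a ∈ s) (hb : b ∈ s) : ∃ p : G.Walk a b, ∀ z ∈ p.support, z ∈ s := by
  obtain ⟨q⟩ := hs.preconnected ⟨a, ha⟩ ⟨b, hb⟩
  refine ⟨q.map (Embedding.induce s).toHom, fun z hz => ?_⟩
  obtain ⟨z', -, rfl⟩ := List.mem_map.1 (Walk.support_map _ q ▸ hz)
  exact z'.2

lemma subset_of_connected_induce {C s : Set V} (hC : (G.induce C).Connected) {a : V}
    (haC : a ∈ C) (has : a ∈ s) (hs : ∀ x ∈ s, ∀ y ∈ C, G.Adj x y → y ∈ s) :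
    C ⊆ s := by
  intro z hz
  obtain ⟨p, hp⟩ := G.exists_walk_of_connected_induce hC haC hz
  clear haC hz
  induction p with
  | nil => exact has
  | cons h p ih => exact ih (hs _ has _ (hp _ (by simp)) h) fun y hy => hp y (by simp [hy])

/-- The component of `G - v` containing `r` (empty if `r = v`). -/
def compOfDel (v r : V) : Set V := {y | ∃ p : G.Walk y r, v ∉ p.support}

/-- `X` is a union of components of `G - v`. -/
def IsSeparatedBy (v : V) (X : Set V) : Prop :=
  v ∉ X ∧ ∀ u ∈ X, ∀ w, G.Adj u w → w ≠ v → w ∈ X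

variable {G}

lemma IsSeparatedBy.compl {v : V} {X : Set V} (hX : G.IsSeparatedBy v X) :
    G.IsSeparatedBy v ({v}ᶜ \ X) :=
  ⟨fun h => h.1 rfl, fun u hu w huw hwv =>
    ⟨hwv, fun hw => hu.2 (hX.2 w hw u huw.symm fun h => hu.1 h)⟩⟩

variable (G)

lemma isSeparatedBy_compOfDel (v r : V) : G.IsSeparatedBy v (G.compOfDel v r) :=
  ⟨fun ⟨p, hp⟩ => hp p.start_mem_support, fun _ ⟨p, hp⟩ w huw hwv =>
    ⟨p.cons huw.symm, by simp [hwv.symm, hp]⟩⟩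

lemma subset_compOfDel {s : Set V} (hs : (G.induce s).Connected) {v r : V} (hr : r ∈ s)
    (hv : v ∉ s) : s ⊆ G.compOfDel v r := fun _ hy =>
  let ⟨p, hp⟩ := G.exists_walk_of_connected_induce hs hy hr
  ⟨p, fun h => hv (hp v h)⟩

lemma isCompOfDel_compOfDel {v r : V} (hr : r ≠ v) : G.IsCompOfDel {v} (G.compOfDel v r) := by
  classical
  have hsep := G.isSeparatedBy_compOfDel v r
  refine ⟨⟨r, Walk.nil, by simpa using hr.symm⟩, Set.disjoint_singleton_right.2 hsep.1,
    G.connected_induce_of_forall_walk (u := r) ⟨Walk.nil, by simpa using hr.symm⟩ ?_,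
    fun u hu w huw hw => hsep.2 u hu w huw hw⟩
  rintro _ ⟨p, hp⟩
  refine ⟨p.reverse, fun z hz => ?_⟩
  rw [Walk.support_reverse, List.mem_reverse] at hz
  exact ⟨p.dropUntil z hz, fun h => hp (p.support_dropUntil_subset_support hz h)⟩

variable {G}

lemma IsCutVertex.compl_compOfDel_nonempty {v r : V} (hcut : G.IsCutVertex v) (hr : r ≠ v) :
    ({v}ᶜ \ G.compOfDel v r).Nonempty := by
  rw [Set.sdiff_nonempty]
  intro hsub
  have hcomp := G.isCompOfDel_compOfDel hr
  have : G.compOfDel v r = {v}ᶜ :=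
    hsub.antisymm' fun y hy h => Set.disjoint_singleton_right.1 hcomp.2.1 (h ▸ hy)
  exact hcut (this ▸ hcomp.2.2.1)

end WalksInSets

section Blocks

variable {G}

lemma Walk.IsPath.notMem_support_takeUntil_or_dropUntil [DecidableEq V] {x y a w : V}
    {p : G.Walk x y} (hp : p.IsPath) (ha : a ∈ p.support) (hwa : w ≠ a) :
    w ∉ (p.takeUntil a ha).support ∨ w ∉ (p.dropUntil a ha).support := by
  by_contra! h
  have hnd := hp.support_nodup
  rw [← p.take_spec ha, Walk.support_append] at hnd
  rw [← Walk.cons_tail_support (p.dropUntil a ha)] at h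
  exact List.disjoint_of_nodup_append hnd h.1 ((List.mem_cons.1 h.2).resolve_left hwa)

/-- Each vertex of the path stays joined, along the path, to an end other than the deleted
vertex; the two ends are joined inside `B` minus that vertex. -/
theorem IsBiconnectedSet.union_support_of_isPath {B : Set V} (hB : G.IsBiconnectedSet B)
    {x y : V} (hx : x ∈ B) (hy : y ∈ B) (hxy : x ≠ y) {p : G.Walk x y} (hp : p.IsPath) :
    G.IsBiconnectedSet (B ∪ {z | z ∈ p.support}) := by
  classical
  refine ⟨induce_union_connected hB.1.preconnected p.connected_induce_support.preconnected
    ⟨x, hx, p.start_mem_support⟩, fun w _ _ => ?_⟩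
  have hBw : (G.induce (B \ {w})).Connected := by
    by_cases hwB : w ∈ B
    · refine hB.2 w hwB ?_
      by_cases hwx : w = x
      · exact ⟨y, hy, fun h => hxy (hwx ▸ h).symm⟩
      · exact ⟨x, hx, fun h => hwx h.symm⟩
    · rw [Set.sdiff_singleton_eq_self hwB]; exact hB.1
  obtain ⟨⟨c, hc⟩⟩ := hBw.nonempty
  have patch : ∀ {a b : V} (q : G.Walk a b), a ∈ B →
      (∀ z ∈ q.support, z ∈ p.support) → w ∉ q.support → b ∈ (B ∪ {z | z ∈ p.support}) \ {w} →
      ∃ s' ⊆ (B ∪ {z | z ∈ p.support}) \ {w}, ∃ (hc' : c ∈ s') (hb : b ∈ s'),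
        (G.induce s').Reachable ⟨c, hc'⟩ ⟨b, hb⟩ := by
    intro a b q ha hqp hwq _
    have haw : a ∉ ({w} : Set V) := fun h => hwq (h ▸ q.start_mem_support)
    refine ⟨(B \ {w}) ∪ {z | z ∈ q.support}, Set.union_subset
      (Set.sdiff_subset_sdiff_left Set.subset_union_left)
      (fun z hz => ⟨Or.inr (hqp z hz), fun h => hwq (h ▸ hz)⟩), Or.inl hc,
      Or.inr q.end_mem_support, ?_⟩
    exact (induce_union_connected hBw.preconnected q.connected_induce_support.preconnected
      ⟨a, ⟨ha, haw⟩, q.start_mem_support⟩).preconnected _ _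
  refine induce_connected_of_patches c (Set.sdiff_subset_sdiff_left Set.subset_union_left hc) ?_
  rintro v hv
  rcases hv with ⟨hvB | hvp, hvw⟩
  · exact ⟨B \ {w}, Set.sdiff_subset_sdiff_left Set.subset_union_left, hc, ⟨hvB, hvw⟩,
      hBw.preconnected _ _⟩
  · rcases hp.notMem_support_takeUntil_or_dropUntil hvp (Ne.symm hvw) with hw | hw
    · exact patch (p.takeUntil v hvp) hx (fun z hz => p.support_takeUntil_subset_support hvp hz)
        hw ⟨Or.inr hvp, hvw⟩
    · refine patch (p.dropUntil v hvp).reverse hy (fun z hz => ?_) (by simpa using hw)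
        ⟨Or.inr hvp, hvw⟩
      rw [Walk.support_reverse, List.mem_reverse] at hz
      exact p.support_dropUntil_subset_support hvp hz

theorem IsBlock.mem_of_adj_of_walk {C : Set V} (hC : G.IsBlock C) {x q c : V} (hx : x ∈ C)
    (hxq : G.Adj x q) (p : G.Walk q c) (hc : c ∈ C) (hxp : x ∉ p.support) : q ∈ C := by
  classical
  have hpath : (Walk.cons hxq p.bypass).IsPath := (Walk.cons_isPath_iff _ _).2
    ⟨p.bypass_isPath, fun h => hxp (p.support_bypass_subset_support h)⟩
  have hxc : x ≠ c := fun h => hxp (h ▸ p.end_mem_support)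
  rw [← hC.2 _ Set.subset_union_left (hC.1.union_support_of_isPath hx hc hxc hpath)]
  exact Or.inr (by simp)

end Blocks

section Chronology

variable (R : Set V)

def CanForce (S : Set V) (u x : V) : Prop :=
  u ∈ S ∧ G.Adj u x ∧ ∀ w, G.Adj u w → w ≠ x → w ∈ S

def forceStep (S : Set V) : Set V := S ∪ {x | ∃ u, G.CanForce S u x}

def coloredAfter (n : ℕ) : Set V := G.forceStep^[n] R

/-- The round in which `x` gets colored (junk value `0` if it never is). -/
noncomputable def forceTime (x : V) : ℕ := sInf {n | x ∈ G.coloredAfter R n}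

open Classical in
/-- A vertex forcing `x` in the round in which `x` gets colored; the junk value `x` if there is
none, in particular for `x ∈ R`. -/
noncomputable def forcer (x : V) : V :=
  if h : ∃ u, G.CanForce (G.coloredAfter R (G.forceTime R x - 1)) u x then h.choose else x

variable {G R}

lemma coloredAfter_succ (n : ℕ) :
    G.coloredAfter R (n + 1) = G.forceStep (G.coloredAfter R n) :=
  Function.iterate_succ_apply' _ _ _

lemma coloredAfter_mono : Monotone (G.coloredAfter R) :=
  monotone_nat_of_le_succ fun n => by rw [coloredAfter_succ]; exact Set.subset_union_left

lemma Forced.exists_mem_coloredAfter [Finite V] {x : V} (hx : G.Forced R x) :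
    ∃ n, x ∈ G.coloredAfter R n := by
  have eventually : ∀ {y}, (∃ n, y ∈ G.coloredAfter R n) →
      ∀ᶠ n in Filter.atTop, y ∈ G.coloredAfter R n :=
    fun ⟨n, hn⟩ => Filter.eventually_atTop.2 ⟨n, fun _ hm => coloredAfter_mono hm hn⟩
  induction hx with
  | init x hx => exact ⟨0, hx⟩
  | force u x _ hux _ ihu ihrest =>
    have hrest : ∀ w, ∀ᶠ n in Filter.atTop,
        G.Adj u w → w ≠ x → w ∈ G.coloredAfter R n := by
      intro w
      by_cases h : G.Adj u w ∧ w ≠ x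
      · exact (eventually (ihrest w h.1 h.2)).mono fun _ hn _ _ => hn
      · exact Filter.Eventually.of_forall fun _ h1 h2 => absurd ⟨h1, h2⟩ h
    obtain ⟨n, hun, hrestn⟩ := ((eventually ihu).and (Filter.eventually_all.2 hrest)).exists
    exact ⟨n + 1, by rw [coloredAfter_succ]; exact Or.inr ⟨u, hun, hux, hrestn⟩⟩

lemma forceTime_le {x : V} {n : ℕ} (h : x ∈ G.coloredAfter R n) : G.forceTime R x ≤ n :=
  Nat.sInf_le h

variable [Finite V]

lemma mem_coloredAfter_forceTime (hZF : G.IsZeroForcingSet R) (x : V) :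
    x ∈ G.coloredAfter R (G.forceTime R x) :=
  Nat.sInf_mem (hZF x).exists_mem_coloredAfter

lemma forceTime_pos_and_exists_canForce (hZF : G.IsZeroForcingSet R) {x : V} (hx : x ∉ R) :
    0 < G.forceTime R x ∧ ∃ u, G.CanForce (G.coloredAfter R (G.forceTime R x - 1)) u x := by
  have hmem := mem_coloredAfter_forceTime hZF x
  obtain ⟨m, hm⟩ : ∃ m, G.forceTime R x = m + 1 :=
    Nat.exists_eq_succ_of_ne_zero fun h => hx (by rw [h] at hmem; exact hmem)
  rw [hm, coloredAfter_succ] at hmem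
  rw [hm, Nat.add_sub_cancel]
  refine ⟨m.succ_pos, hmem.resolve_left fun h => ?_⟩
  have := forceTime_le h
  omega

lemma canForce_forcer (hZF : G.IsZeroForcingSet R) {x : V} (hx : x ∉ R) :
    G.CanForce (G.coloredAfter R (G.forceTime R x - 1)) (G.forcer R x) x := by
  have h := (forceTime_pos_and_exists_canForce hZF hx).2
  rw [forcer, dif_pos h]
  exact h.choose_spec

lemma adj_forcer (hZF : G.IsZeroForcingSet R) {x : V} (hx : x ∉ R) : G.Adj (G.forcer R x) x :=
  (canForce_forcer hZF hx).2.1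

lemma forceTime_forcer_lt (hZF : G.IsZeroForcingSet R) {x : V} (hx : x ∉ R) :
    G.forceTime R (G.forcer R x) < G.forceTime R x := by
  have := forceTime_le (canForce_forcer hZF hx).1
  have := (forceTime_pos_and_exists_canForce hZF hx).1
  omega

lemma forceTime_lt_of_adj_forcer (hZF : G.IsZeroForcingSet R) {x w : V} (hx : x ∉ R)
    (hw : G.Adj (G.forcer R x) w) (hwx : w ≠ x) : G.forceTime R w < G.forceTime R x := by
  have := forceTime_le ((canForce_forcer hZF hx).2.2 w hw hwx)
  have := (forceTime_pos_and_exists_canForce hZF hx).1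
  omega

lemma forcer_injOn (hZF : G.IsZeroForcingSet R) : Set.InjOn (G.forcer R) Rᶜ := by
  intro x hx y hy hxy
  by_contra hne
  have := forceTime_lt_of_adj_forcer hZF hx (hxy ▸ adj_forcer hZF hy) (Ne.symm hne)
  have := forceTime_lt_of_adj_forcer hZF hy (hxy ▸ adj_forcer hZF hx) hne
  omega

end Chronology

section PendantSide

variable (R : Set V)

def ForcesWithin (X : Set V) (p q : V) : Prop := q ∈ X ∧ G.forcer R q = p

structure IsFirstForced (X : Set V) (v b : V) : Prop where
  isZeroForcingSet : G.IsZeroForcingSet R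
  isSeparatedBy : G.IsSeparatedBy v X
  disjoint : Disjoint X R
  mem : b ∈ X
  forceTime_le : ∀ p ∈ X, G.forceTime R b ≤ G.forceTime R p

variable {G R} {X : Set V} {v b : V}

lemma IsFirstForced.notMem (h : G.IsFirstForced R X v b) {x : V} (hx : x ∈ X) : x ∉ R :=
  Set.disjoint_left.1 h.disjoint hx

variable [Finite V]

lemma subsingleton_setOf_forcer_eq (hZF : G.IsZeroForcingSet R) (hXR : Disjoint X R) (x : V) :
    {w | w ∈ X ∧ G.forcer R w = x}.Subsingleton := fun _ hw _ hw' =>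
  forcer_injOn hZF (Set.disjoint_left.1 hXR hw.1) (Set.disjoint_left.1 hXR hw'.1)
    (hw.2.trans hw'.2.symm)

lemma forceTime_lt_of_reflTransGen (hZF : G.IsZeroForcingSet R) (hXR : Disjoint X R)
    {p q : V} (h : Relation.ReflTransGen (G.ForcesWithin R X) p q) (hpq : p ≠ q) :
    G.forceTime R p < G.forceTime R q := by
  induction h with
  | refl => exact absurd rfl hpq
  | @tail c q hpc hcq ih =>
    have hstep : G.forceTime R c < G.forceTime R q :=
      hcq.2 ▸ forceTime_forcer_lt hZF (Set.disjoint_left.1 hXR hcq.1)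
    by_cases hpc' : p = c
    · exact hpc' ▸ hstep
    · exact (ih hpc').trans hstep

namespace IsFirstForced

lemma forcer_eq (h : G.IsFirstForced R X v b) : G.forcer R b = v := by
  by_contra hb
  exact (forceTime_forcer_lt h.isZeroForcingSet (h.notMem h.mem)).not_ge
    (h.forceTime_le _ (h.isSeparatedBy.2 b h.mem _ (adj_forcer h.isZeroForcingSet
      (h.notMem h.mem)).symm hb))

lemma adj (h : G.IsFirstForced R X v b) : G.Adj v b :=
  h.forcer_eq ▸ adj_forcer h.isZeroForcingSet (h.notMem h.mem)

lemma forcer_mem (h : G.IsFirstForced R X v b) {x : V} (hx : x ∈ X) (hxb : x ≠ b) :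
    G.forcer R x ∈ X := by
  have hadj := adj_forcer h.isZeroForcingSet (h.notMem hx)
  by_contra hf
  have hfx : G.forcer R x = v := by
    by_contra hfx
    exact hf (h.isSeparatedBy.2 x hx _ hadj.symm hfx)
  have hbx : G.Adj (G.forcer R b) x := by rw [h.forcer_eq, ← hfx]; exact hadj
  exact (forceTime_lt_of_adj_forcer h.isZeroForcingSet (h.notMem h.mem) hbx hxb).not_ge
    (h.forceTime_le x hx)

lemma reflTransGen_forcesWithin (h : G.IsFirstForced R X v b) {x : V} (hx : x ∈ X) :
    Relation.ReflTransGen (G.ForcesWithin R X) b x := by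
  induction hn : G.forceTime R x using Nat.strong_induction_on generalizing x with
  | _ n ih =>
    by_cases hxb : x = b
    · exact hxb ▸ Relation.ReflTransGen.refl
    · refine (ih _ ?_ (h.forcer_mem hx hxb) rfl).tail ⟨hx, rfl⟩
      exact hn ▸ forceTime_forcer_lt h.isZeroForcingSet (h.notMem hx)

/-- The vertices of `X` are forced one after the other, starting from `b`; an edge of `X`
joining two vertices that do not force each other would block the force out of its earlier
end. -/
lemma forcer_eq_or_forcer_eq_of_adj (h : G.IsFirstForced R X v b) {x w : V} (hx : x ∈ X)
    (hw : w ∈ X) (hxw : G.Adj x w) :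
    G.forcer R x = w ∨ G.forcer R w = x := by
  have key : ∀ {x w}, Relation.ReflTransGen (G.ForcesWithin R X) x w → G.Adj x w →
      G.forcer R w = x := by
    intro x w hxw hadj
    rcases hxw.cases_head with rfl | ⟨c, ⟨hcX, hcx⟩, hcw⟩
    · exact (G.irrefl hadj).elim
    · by_contra hne
      have hcw' : c ≠ w := by rintro rfl; exact hne hcx
      have := forceTime_lt_of_reflTransGen h.isZeroForcingSet h.disjoint hcw hcw'
      have := forceTime_lt_of_adj_forcer h.isZeroForcingSet (h.notMem hcX) (hcx ▸ hadj)
        hcw'.symm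
      omega
  have hunique : Relator.RightUnique (G.ForcesWithin R X) := fun _ _ _ hq hq' =>
    subsingleton_setOf_forcer_eq h.isZeroForcingSet h.disjoint _ hq hq'
  rcases (h.reflTransGen_forcesWithin hx).total_of_right_unique hunique
    (h.reflTransGen_forcesWithin hw) with hxw' | hwx'
  · exact Or.inr (key hxw' hxw)
  · exact Or.inl (key hwx' hxw.symm)

lemma connected_induce (h : G.IsFirstForced R X v b) : (G.induce X).Connected := by
  have key : ∀ {x}, Relation.ReflTransGen (G.ForcesWithin R X) b x →
      ∃ hx : x ∈ X, (G.induce X).Reachable ⟨b, h.mem⟩ ⟨x, hx⟩ := by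
    intro x hbx
    induction hbx with
    | refl => exact ⟨h.mem, .rfl⟩
    | tail _ hcx ih =>
      obtain ⟨_, hreach⟩ := ih
      exact ⟨hcx.1, hreach.trans
        (Adj.reachable (hcx.2 ▸ adj_forcer h.isZeroForcingSet (h.notMem hcx.1)))⟩
  refine (connected_iff_exists_forall_reachable _).2 ⟨⟨b, h.mem⟩, fun ⟨x, hx⟩ => ?_⟩
  exact (key (h.reflTransGen_forcesWithin hx)).2

lemma ncard_neighborSet_inter_le_two (h : G.IsFirstForced R X v b) {x : V} (hx : x ∈ X) :
    (G.neighborSet x ∩ X).ncard ≤ 2 := by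
  have hsub : G.neighborSet x ∩ X ⊆ insert (G.forcer R x) {w | w ∈ X ∧ G.forcer R w = x} :=
    fun w ⟨hxw, hw⟩ => (h.forcer_eq_or_forcer_eq_of_adj hx hw hxw).imp Eq.symm fun hwx =>
      ⟨hw, hwx⟩
  have := Set.ncard_le_one_iff_subsingleton.2
    (subsingleton_setOf_forcer_eq h.isZeroForcingSet h.disjoint x)
  have := (Set.ncard_le_ncard hsub).trans (Set.ncard_insert_le _ _)
  omega

lemma ncard_neighborSet_inter_le_one (h : G.IsFirstForced R X v b) :
    (G.neighborSet b ∩ X).ncard ≤ 1 := by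
  have hsub : G.neighborSet b ∩ X ⊆ {w | w ∈ X ∧ G.forcer R w = b} := fun w ⟨hbw, hw⟩ =>
    ⟨hw, (h.forcer_eq_or_forcer_eq_of_adj h.mem hw hbw).resolve_left fun hbw' =>
      h.isSeparatedBy.1 (h.forcer_eq ▸ hbw' ▸ hw)⟩
  exact (Set.ncard_le_ncard hsub).trans (Set.ncard_le_one_iff_subsingleton.2
    (subsingleton_setOf_forcer_eq h.isZeroForcingSet h.disjoint b))

theorem isPendantPath (h : G.IsFirstForced R X v b) : G.IsPendantPath v X :=
  ⟨⟨⟨b, h.mem⟩, Set.disjoint_singleton_right.2 h.isSeparatedBy.1, h.connected_induce,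
      fun u hu w huw hw => h.isSeparatedBy.2 u hu w huw hw⟩,
    ⟨⟨b, h.mem⟩, h.connected_induce, fun _ hx => h.ncard_neighborSet_inter_le_two hx,
      b, h.mem, h.ncard_neighborSet_inter_le_one⟩,
    b, h.mem, h.adj, h.ncard_neighborSet_inter_le_one⟩

end IsFirstForced

lemma IsSeparatedBy.exists_isFirstForced (hZF : G.IsZeroForcingSet R) (hX : G.IsSeparatedBy v X)
    (hXR : Disjoint X R) (hne : X.Nonempty) : ∃ b, G.IsFirstForced R X v b :=
  let ⟨b, hb, hmin⟩ := Set.exists_min_image X (G.forceTime R) X.toFinite hne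
  ⟨b, hZF, hX, hXR, hb, hmin⟩

theorem IsSeparatedBy.forceTime_lt (hZF : G.IsZeroForcingSet R) (hX : G.IsSeparatedBy v X)
    (hXR : Disjoint X R) {p : V} (hp : p ∈ X) : G.forceTime R v < G.forceTime R p := by
  obtain ⟨b, h⟩ := hX.exists_isFirstForced hZF hXR ⟨p, hp⟩
  rw [← h.forcer_eq]
  exact (forceTime_forcer_lt hZF (h.notMem h.mem)).trans_le (h.forceTime_le p hp)

end PendantSide

section CycleBlock

variable {G} {R : Set V}

lemma disjoint_compl_compOfDel (hRc : (G.induce R).Connected) {v r : V} (hr : r ∈ R)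
    (hv : v ∉ R) : Disjoint ({v}ᶜ \ G.compOfDel v r) R :=
  Set.disjoint_left.2 fun _ hy hyR => hy.2 (G.subset_compOfDel hRc hr hv hyR)

variable [Finite V]

theorem IsCutVertex.delHasTwoComps_and_exists_isPendantPath (hZF : G.IsZeroForcingSet R)
    (hRc : (G.induce R).Connected) {v : V} (hv : v ∉ R) (hcut : G.IsCutVertex v) :
    G.DelHasTwoComps v ∧ ∃ P, G.IsPendantPath v P := by
  obtain ⟨⟨r, hr⟩⟩ := hRc.nonempty
  have hrv : r ≠ v := fun h => hv (h ▸ hr)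
  have hsep := G.isSeparatedBy_compOfDel v r
  obtain ⟨b, hb⟩ := hsep.compl.exists_isFirstForced hZF (disjoint_compl_compOfDel hRc hr hv)
    (hcut.compl_compOfDel_nonempty hrv)
  exact ⟨⟨_, _, G.isCompOfDel_compOfDel hrv, hb.isPendantPath.1, Set.disjoint_sdiff_right,
    Set.union_sdiff_cancel fun _ hy h => hsep.1 (h ▸ hy)⟩, _, hb.isPendantPath⟩

variable {C : Set V} {r : V}

theorem IsBlock.forcer_mem (hZF : G.IsZeroForcingSet R) (hRc : (G.induce R).Connected)
    (hC : G.IsBlock C) (hrC : r ∈ C) (hrR : r ∈ R) {x : V} (hxC : x ∈ C) (hxR : x ∉ R) :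
    G.forcer R x ∈ C := by
  by_contra hu
  have hadj := adj_forcer hZF hxR
  have hmem : G.forcer R x ∈ {x}ᶜ \ G.compOfDel x r :=
    ⟨hadj.ne, fun ⟨p, hp⟩ => hu (hC.mem_of_adj_of_walk hxC hadj.symm p hrC hp)⟩
  exact (forceTime_forcer_lt hZF hxR).not_gt ((G.isSeparatedBy_compOfDel x r).compl.forceTime_lt
    hZF (disjoint_compl_compOfDel hRc hrR hxR) hmem)

theorem IsBlock.forcer_ne_of_isCutVertex (hZF : G.IsZeroForcingSet R)
    (hRc : (G.induce R).Connected) (hC : G.IsBlock C) (hrC : r ∈ C) (hrR : r ∈ R) {v w : V}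
    (hvC : v ∈ C) (hvR : v ∉ R) (hcut : G.IsCutVertex v) (hwC : w ∈ C) (hwR : w ∉ R) :
    G.forcer R w ≠ v := by
  intro hwv
  have hrv : r ≠ v := fun h => hvR (h ▸ hrR)
  obtain ⟨b, hb⟩ := (G.isSeparatedBy_compOfDel v r).compl.exists_isFirstForced hZF
    (disjoint_compl_compOfDel hRc hrR hvR) (hcut.compl_compOfDel_nonempty hrv)
  obtain rfl : w = b := forcer_injOn hZF hwR (hb.notMem hb.mem) (hwv.trans hb.forcer_eq.symm)
  have hCv : C \ {v} ⊆ G.compOfDel v r :=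
    G.subset_compOfDel (hC.1.2 v hvC ⟨r, hrC, hrv⟩) ⟨hrC, hrv⟩ fun h => h.2 rfl
  exact hb.mem.2 (hCv ⟨hwC, hb.mem.1⟩)

lemma neighborSet_inter_eq_pair {x a b : V} (h : (G.neighborSet x ∩ C).ncard = 2)
    (ha : G.Adj x a) (haC : a ∈ C) (hb : G.Adj x b) (hbC : b ∈ C) (hab : a ≠ b) :
    G.neighborSet x ∩ C = {a, b} :=
  (Set.eq_of_subset_of_ncard_le (by simp [Set.insert_subset_iff, ha, haC, hb, hbC])
    (by rw [h, Set.ncard_pair hab])).symm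

/-- Along the segment `C \ R`, once a vertex is not forced from behind it is forced from ahead,
so the direction of forcing persists up to the end of the path. -/
theorem exists_forcer_eq_of_isPath (hZF : G.IsZeroForcingSet R)
    (hC2 : ∀ x ∈ C, (G.neighborSet x ∩ C).ncard = 2)
    (hforcer : ∀ x ∈ C \ R, G.forcer R x ∈ C)
    {a z : V} (p : G.Walk a z) (hp : p.IsPath) (hpD : ∀ y ∈ p.support, y ∈ C \ R) {u : V}
    (huC : u ∈ C) (hua : G.Adj u a) (hup : u ∉ p.support) (hfa : G.forcer R a ≠ u)
    (haz : a ≠ z) : ∃ c ∈ C \ R, G.forcer R c = z := by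
  induction p generalizing u with
  | nil => exact absurd rfl haz
  | @cons a a' z haa' p ih =>
    have haD := hpD a (by simp)
    have ha'D := hpD a' (by simp)
    obtain ⟨hp', hap⟩ := (Walk.cons_isPath_iff _ _).1 hp
    have hfa' : G.forcer R a = a' := by
      have hf : G.forcer R a ∈ G.neighborSet a ∩ C :=
        ⟨(adj_forcer hZF haD.2).symm, hforcer a haD⟩
      rw [neighborSet_inter_eq_pair (hC2 a haD.1) hua.symm huC haa' ha'D.1
        fun h => hup (by rw [h]; simp)] at hf
      exact hf.resolve_left hfa
    by_cases ha'z : a' = z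
    · exact ⟨a, haD, hfa'.trans ha'z⟩
    · refine ih hp' (fun y hy => hpD y (by simp [hy])) haD.1 haa' hap (fun h => ?_) ha'z
      have h1 := forceTime_forcer_lt hZF haD.2
      have h2 := forceTime_forcer_lt hZF ha'D.2
      rw [hfa'] at h1
      rw [h] at h2
      omega

theorem IsBlock.adj_of_isCutVertex (hZF : G.IsZeroForcingSet R) (hRc : (G.induce R).Connected)
    (hC : G.IsBlock C) (hC2 : ∀ x ∈ C, (G.neighborSet x ∩ C).ncard = 2) (hrC : r ∈ C)
    (hrR : r ∈ R) (hD : (G.induce (C \ R)).Connected) {u v : V} (hu : u ∈ C \ R)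
    (hv : v ∈ C \ R) (hcu : G.IsCutVertex u) (hcv : G.IsCutVertex v) (huv : u ≠ v) :
    G.Adj u v := by
  classical
  by_contra hnadj
  obtain ⟨p, hpD⟩ := G.exists_walk_of_connected_induce hD hu hv
  have hqD : ∀ y ∈ p.bypass.support, y ∈ C \ R := fun y hy =>
    hpD y (p.support_bypass_subset_support hy)
  have hq := p.bypass_isPath
  generalize p.bypass = q at hq hqD
  cases q with
  | nil => exact huv rfl
  | @cons _ x _ hux q =>
    obtain ⟨hq', huq⟩ := (Walk.cons_isPath_iff _ _).1 hq
    have hxD := hqD x (by simp)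
    obtain ⟨c, hcD, hcv'⟩ := exists_forcer_eq_of_isPath hZF hC2
      (fun x hx => hC.forcer_mem hZF hRc hrC hrR hx.1 hx.2) q hq'
      (fun y hy => hqD y (by simp [hy])) hu.1 hux huq
      (hC.forcer_ne_of_isCutVertex hZF hRc hrC hrR hu.1 hu.2 hcu hxD.1 hxD.2)
      (fun h => hnadj (h ▸ hux))
    exact hC.forcer_ne_of_isCutVertex hZF hRc hrC hrR hv.1 hv.2 hcv hcD.1 hcD.2 hcv'

lemma IsCycleGraphOn.subset_of_triangle (hC : G.IsCycleGraphOn C) {a b c : V} (ha : a ∈ C)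
    (hb : b ∈ C) (hc : c ∈ C) (hab : G.Adj a b) (hac : G.Adj a c) (hbc : G.Adj b c) :
    C ⊆ {a, b, c} := by
  refine G.subset_of_connected_induce hC.2.1 ha (by simp) fun x hx y hy hxy => ?_
  have hy' : y ∈ G.neighborSet x ∩ C := ⟨hxy, hy⟩
  rcases hx with rfl | rfl | rfl
  · rw [neighborSet_inter_eq_pair (hC.2.2 x ha) hab hb hac hc hbc.ne] at hy'
    rcases hy' with rfl | rfl <;> simp
  · rw [neighborSet_inter_eq_pair (hC.2.2 x hb) hab.symm ha hbc hc hac.ne] at hy'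
    rcases hy' with rfl | rfl <;> simp
  · rw [neighborSet_inter_eq_pair (hC.2.2 x hc) hac.symm ha hbc.symm hb hab.ne] at hy'
    rcases hy' with rfl | rfl <;> simp

theorem ncard_setOf_isCutVertex_le_two (hZF : G.IsZeroForcingSet R)
    (hRc : (G.induce R).Connected) (hB : G.IsBlock C) (hC : G.IsCycleGraphOn C)
    (hD : (G.induce (C \ R)).Connected) (hDC : C \ R ≠ C) :
    {v | v ∈ C \ R ∧ G.IsCutVertex v}.ncard ≤ 2 := by
  obtain ⟨r, hrC, hrR⟩ := Set.not_disjoint_iff.1 (mt sdiff_eq_left.2 hDC)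
  by_contra! h3
  obtain ⟨a, b, c, ha, hb, hc, hab, hac, hbc⟩ := (Set.two_lt_ncard_iff (Set.toFinite _)).1 h3
  have adj : ∀ {u v : V}, u ∈ C \ R ∧ G.IsCutVertex u → v ∈ C \ R ∧ G.IsCutVertex v →
      u ≠ v → G.Adj u v := fun hu hv =>
    hB.adj_of_isCutVertex hZF hRc hC.2.2 hrC hrR hD hu.1 hv.1 hu.2 hv.2
  refine hDC (Set.Subset.antisymm Set.sdiff_subset fun z hz => ?_)
  rcases hC.subset_of_triangle ha.1.1 hb.1.1 hc.1.1 (adj ha hb hab) (adj ha hc hac)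
    (adj hb hc hbc) hz with rfl | rfl | rfl
  exacts [ha.1, hb.1, hc.1]

end CycleBlock

end SimpleGraph

theorem stmt15_general {V : Type} [Fintype V] (G : SimpleGraph V)
    (C : Set V) (hB : G.IsBlock C) (hC : G.IsCycleGraphOn C)
    (R : Set V) (hR : G.IsConnectedZFS R) (hseg : G.IsSegmentOf C (C \ R)) :
    {v | v ∈ C \ R ∧ G.IsCutVertex v}.ncard ≤ 2 ∧
    ∀ v ∈ C \ R, G.IsCutVertex v →
      G.DelHasTwoComps v ∧ ∃ P : Set V, G.IsPendantPath v P := by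
  refine ⟨?_, fun v hv hcut =>
    hcut.delHasTwoComps_and_exists_isPendantPath hR.1 hR.2 hv.2⟩
  rcases hseg.2 with hD | ⟨hD, hDC⟩
  · simp [hD]
  · exact SimpleGraph.ncard_setOf_isCutVertex_le_two hR.1 hR.2 hB hC hD hDC

/-- A segment of a cycle block excluded from a connected forcing set contains at most two
cut vertices of `G`, each of which has exactly two components in `G − v`, one of which is
a pendant path attached to `v`. -/
theorem stmt15 {V : Type} [Fintype V] (G : SimpleGraph V) (hG : G.Connected)
    (C : Set V) (hB : G.IsBlock C) (hC : G.IsCycleGraphOn C)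
    (R : Set V) (hR : G.IsConnectedZFS R) (hseg : G.IsSegmentOf C (C \ R)) :
    {v | v ∈ C \ R ∧ G.IsCutVertex v}.ncard ≤ 2 ∧
    ∀ v ∈ C \ R, G.IsCutVertex v →
      G.DelHasTwoComps v ∧ ∃ P : Set V, G.IsPendantPath v P :=
  stmt15_general G C hB hC R hR hseg
end

section
/- Let G be a block graph with no pendant paths, and let b be the number of blocks of G that contain at least one non-cut vertex. Then Z_c(G) = n − b, where n is the number of vertices of G. -/
/-!
In a block graph the closed neighbourhood `N[u]` of a non-cut vertex `u` is a block, and every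
block containing a non-cut vertex is of this form, so `b` is the number of distinct sets `N[u]`
with `u` not a cut vertex.

Lower bound. Let `S` be a connected zero forcing set and `u ∉ S`. If `u` were a cut vertex, some
component of `G − u` would miss `S`; it can only be entered from `u`, so it is forced along a
single chain and is a pendant path. Two vertices outside `S` with the same closed neighbourhood
would form a fort. Hence `N[·]` embeds `V \ S` into the blocks counted by `b`.

Upper bound. Remove one non-cut vertex from each such block. The rest stays connected, because the
neighbours of a removed vertex are pairwise adjacent. Measure distances from a remaining vertex
`r`: every block has a unique vertex (its gate) nearest to `r`, and a vertex is never a non-gate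
of two blocks, since geodesics to the two gates would close up into a cycle through both blocks.
A removed vertex `x` is not its block's gate, and the block has a third vertex `w` (otherwise `x`
is a pendant leaf); every removed neighbour of `w` other than `x` is farther from `r`, so forcing
outwards from `r`, `w` eventually forces `x`.
-/

namespace SimpleGraph

variable {V : Type*} {G : SimpleGraph V} {s A B B' C F S T : Set V}
  {a b c g g' r u v w x y : V}

theorem induce_connected_of_walks (ha : a ∈ s)
    (h : ∀ v ∈ s, ∃ p : G.Walk a v, {z | z ∈ p.support} ⊆ s) : (G.induce s).Connected :=
  G.induce_connected_of_patches a ha fun hv =>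
    let ⟨p, hp⟩ := h _ hv
    ⟨_, hp, p.start_mem_support, p.end_mem_support,
      p.connected_induce_support.preconnected _ _⟩

theorem Reachable.exists_isPath_of_induce {x y : s} (h : (G.induce s).Reachable x y) :
    ∃ p : G.Walk x y, p.IsPath ∧ {z | z ∈ p.support} ⊆ s := by
  classical
  obtain ⟨W⟩ := h
  let p := W.map (Embedding.induce s).toHom
  refine ⟨p.bypass, p.bypass_isPath, fun z hz => ?_⟩
  have hz := p.support_bypass_subset_support hz
  rw [Walk.support_map, List.mem_map] at hz
  obtain ⟨z', -, rfl⟩ := hz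
  exact z'.2

theorem IsClique.induce_connected (hs : G.IsClique s) (hne : s.Nonempty) :
    (G.induce s).Connected := by
  have : Nonempty s := hne.to_subtype
  refine Connected.mk fun x y => ?_
  rcases eq_or_ne x y with rfl | hxy
  · rfl
  · exact Adj.reachable (hs x.2 y.2 (Subtype.coe_ne_coe.mpr hxy))

namespace Walk

theorem IsPath.append_of_inter {p : G.Walk a c} {q : G.Walk c b} (hp : p.IsPath)
    (hq : q.IsPath) (h : ∀ y ∈ p.support, y ∈ q.support → y = c) : (p.append q).IsPath := by
  have hq' := hq.support_nodup
  rw [← cons_tail_support, List.nodup_cons] at hq'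
  refine IsPath.mk' ?_
  rw [support_append, List.nodup_append]
  refine ⟨hp.support_nodup, hq'.2, fun y hy y' hy' hyy' => hq'.1 ?_⟩
  subst hyy'
  exact h y hy (List.mem_of_mem_tail hy') ▸ hy'

theorem IsPath.support_tail {p : G.Walk u v} (hp : p.IsPath) (hn : ¬ p.Nil) :
    {z | z ∈ p.tail.support} = {z | z ∈ p.support} \ {u} := by
  have hnd := hp.support_nodup
  rw [← cons_tail_support, List.nodup_cons] at hnd
  ext z
  rw [support_tail_of_not_nil _ hn, Set.mem_ofPred_eq, Set.mem_sdiff, Set.mem_ofPred_eq,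
    ← cons_tail_support, List.mem_cons, Set.mem_singleton_iff]
  exact ⟨fun hz => ⟨Or.inr hz, fun hzu => hnd.1 (hzu ▸ hz)⟩,
    fun ⟨hz, hzu⟩ => hz.resolve_left hzu⟩

theorem IsCycle.isBiconnectedSet {c : G.Walk v v} (hc : c.IsCycle) :
    G.IsBiconnectedSet {z | z ∈ c.support} := by
  classical
  refine ⟨c.connected_induce_support, fun x hx _ => ?_⟩
  -- rotating the cycle to start at `x`, removing `x` leaves a path
  have key : ∀ c : G.Walk x x, c.IsCycle →
      (G.induce ({z | z ∈ c.support} \ {x})).Connected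
    | .nil, hc => (not_isCycle_nil hc).elim
    | .cons h p, hc => by
      have hp := ((cons_isCycle_iff p h).mp hc).1
      have hn : ¬ p.reverse.Nil := fun hn => h.ne (nil_reverse.mp hn).eq.symm
      have hset :
          {z | z ∈ (cons h p).support} \ {x} = {z | z ∈ p.reverse.tail.support} := by
        rw [hp.reverse.support_tail hn]
        ext z
        simp only [support_cons, support_reverse, List.mem_cons, List.mem_reverse,
          Set.mem_sdiff, Set.mem_ofPred_eq, Set.mem_singleton_iff]
        tauto
      rw [hset]
      exact connected_induce_support _
  have hrot : {z | z ∈ (c.rotate x hx).support} = {z | z ∈ c.support} := by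
    ext z
    exact mem_support_rotate_iff c x hx
  exact hrot ▸ key _ (hc.rotate hx)

end Walk

theorem isBiconnectedSet_of_paths {q₁ : G.Walk c a} {q₂ : G.Walk c b} (hq₁ : q₁.IsPath)
    (hq₂ : q₂.IsPath) (hinter : ∀ y ∈ q₁.support, y ∈ q₂.support → y = c) (hab : G.Adj a b)
    (hca : c ≠ a) (hcb : c ≠ b) :
    G.IsBiconnectedSet ({y | y ∈ q₁.support} ∪ {y | y ∈ q₂.support}) := by
  have hP : (q₂.reverse.append q₁).IsPath :=
    hq₂.reverse.append_of_inter hq₁ fun y hy hy₁ =>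
      hinter y hy₁ (by rwa [Walk.support_reverse, List.mem_reverse] at hy)
  have hcyc : (Walk.cons hab (q₂.reverse.append q₁)).IsCycle := by
    refine (Walk.cons_isCycle_iff _ hab).mpr ⟨hP, fun he => ?_⟩
    rw [Walk.edges_append, List.mem_append, Walk.edges_reverse, List.mem_reverse] at he
    rcases he with he | he
    · exact hca (hinter a q₁.end_mem_support (q₂.fst_mem_support_of_mem_edges he)).symm
    · exact hcb (hinter b (q₁.snd_mem_support_of_mem_edges he) q₂.end_mem_support).symm
  convert hcyc.isBiconnectedSet using 1
  ext z
  simp only [Walk.support_cons, Walk.mem_support_append_iff, Walk.support_reverse,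
    List.mem_cons, List.mem_reverse, Set.mem_union, Set.mem_ofPred_eq]
  constructor
  · tauto
  · rintro (rfl | h | h)
    exacts [Or.inl q₁.end_mem_support, Or.inr h, Or.inl h]

theorem IsBiconnectedSet.induce_diff_connected (hA : G.IsBiconnectedSet A) (hx : x ∈ A)
    (hxv : x ≠ v) : (G.induce (A \ {v})).Connected := by
  by_cases hv : v ∈ A
  · exact hA.2 v hv ⟨x, hx, hxv⟩
  · rw [Set.sdiff_singleton_eq_self hv]
    exact hA.1

theorem IsBiconnectedSet.union (hA : G.IsBiconnectedSet A) (hB : G.IsBiconnectedSet B)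
    (hx : x ∈ A ∩ B) (hy : y ∈ A ∩ B) (hxy : x ≠ y) : G.IsBiconnectedSet (A ∪ B) := by
  refine ⟨induce_union_connected hA.1.preconnected hB.1.preconnected ⟨x, hx⟩, fun v _ _ => ?_⟩
  obtain ⟨z, ⟨hzA, hzB⟩, hzv⟩ : ∃ z ∈ A ∩ B, z ≠ v := by
    rcases eq_or_ne x v with rfl | hxv
    exacts [⟨y, hy, hxy.symm⟩, ⟨x, hx, hxv⟩]
  rw [Set.union_sdiff_distrib]
  exact induce_union_connected (hA.induce_diff_connected hzA hzv).preconnected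
    (hB.induce_diff_connected hzB hzv).preconnected ⟨z, ⟨hzA, hzv⟩, hzB, hzv⟩

theorem isBiconnectedSet_of_isClique (hA : G.IsClique A) (hne : A.Nonempty) :
    G.IsBiconnectedSet A :=
  ⟨hA.induce_connected hne, fun _ _ hne' =>
    (hA.subset Set.sdiff_subset).induce_connected hne'⟩

theorem IsBlock.subset_of_isBiconnectedSet (hB : G.IsBlock B) (hA : G.IsBiconnectedSet A)
    (hx : x ∈ A ∩ B) (hy : y ∈ A ∩ B) (hxy : x ≠ y) : A ⊆ B :=
  Set.union_eq_left.mp <| hB.2 _ Set.subset_union_left <|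
    hB.1.union hA ⟨hx.2, hx.1⟩ ⟨hy.2, hy.1⟩ hxy

theorem IsBlock.eq_of_mem_inter (hB : G.IsBlock B) (hB' : G.IsBlock B') (hx : x ∈ B ∩ B')
    (hy : y ∈ B ∩ B') (hxy : x ≠ y) : B = B' :=
  (hB'.subset_of_isBiconnectedSet hB.1 hx hy hxy).antisymm
    (hB.subset_of_isBiconnectedSet hB'.1 ⟨hx.2, hx.1⟩ ⟨hy.2, hy.1⟩ hxy)

theorem exists_isBlock_superset [Finite V] (hA : G.IsBiconnectedSet A) :
    ∃ B, G.IsBlock B ∧ A ⊆ B := by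
  obtain ⟨B, hB⟩ := (Set.toFinite {B | A ⊆ B ∧ G.IsBiconnectedSet B}).exists_maximal
    ⟨A, subset_rfl, hA⟩
  refine ⟨B, ⟨hB.prop.2, fun B' hBB' hB' => ?_⟩, hB.prop.1⟩
  exact (hB.eq_of_le ⟨hB.prop.1.trans hBB', hB'⟩ hBB').symm

def IsBlockGraph (G : SimpleGraph V) : Prop :=
  ∀ B, G.IsBlock B → G.IsClique B

def closedNbhd (G : SimpleGraph V) (v : V) : Set V :=
  insert v (G.neighborSet v)

theorem self_mem_closedNbhd : v ∈ G.closedNbhd v := Set.mem_insert _ _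

theorem IsClique.subset_closedNbhd (hA : G.IsClique A) (hv : v ∈ A) : A ⊆ G.closedNbhd v :=
  fun w hw => (eq_or_ne w v).imp id fun hwv => hA hv hw hwv.symm

theorem exists_isPath_of_not_isCutVertex (hu : ¬ G.IsCutVertex u) (ha : a ≠ u) (hb : b ≠ u) :
    ∃ p : G.Walk a b, p.IsPath ∧ u ∉ p.support := by
  obtain ⟨p, hp, hsub⟩ := Reachable.exists_isPath_of_induce
    ((not_not.mp hu).preconnected ⟨a, ha⟩ ⟨b, hb⟩)
  exact ⟨p, hp, fun h => hsub h rfl⟩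

namespace IsBlockGraph

variable [Finite V]

theorem isClique_of_isBiconnectedSet (hG : G.IsBlockGraph) (hA : G.IsBiconnectedSet A) :
    G.IsClique A :=
  let ⟨_, hB, hAB⟩ := exists_isBlock_superset hA
  (hG _ hB).subset hAB

theorem isClique_closedNbhd (hG : G.IsBlockGraph) (hu : ¬ G.IsCutVertex u) :
    G.IsClique (G.closedNbhd u) := by
  rintro a (rfl | ha) b (rfl | hb) hab
  · exact absurd rfl hab
  · exact hb
  · exact ha.symm
  rw [mem_neighborSet] at ha hb
  -- a path from `a` to `b` avoiding `u` closes up through `u` to a cycle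
  obtain ⟨p, hp, hup⟩ := exists_isPath_of_not_isCutVertex hu ha.ne' hb.ne'
  have hcyc : (Walk.cons hb.symm (Walk.cons ha p)).IsCycle := by
    refine (Walk.cons_isCycle_iff _ _).mpr ⟨hp.cons hup, ?_⟩
    rw [Walk.edges_cons, List.mem_cons, Sym2.eq_iff, not_or]
    exact ⟨fun h => h.elim (fun h => hb.ne h.1.symm) (fun h => hab h.1.symm),
      fun he => hup (p.snd_mem_support_of_mem_edges he)⟩
  exact isClique_of_isBiconnectedSet hG hcyc.isBiconnectedSet (by simp) (by simp) hab

theorem eq_closedNbhd (hG : G.IsBlockGraph) (hB : G.IsBlock B) (hu : u ∈ B)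
    (hnc : ¬ G.IsCutVertex u) : B = G.closedNbhd u :=
  (hB.2 _ ((hG B hB).subset_closedNbhd hu) <|
    isBiconnectedSet_of_isClique (hG.isClique_closedNbhd hnc) ⟨u, self_mem_closedNbhd⟩).symm

theorem isBlock_closedNbhd (hG : G.IsBlockGraph) (hu : ¬ G.IsCutVertex u) :
    G.IsBlock (G.closedNbhd u) := by
  obtain ⟨B, hB, hsub⟩ := exists_isBlock_superset
    (isBiconnectedSet_of_isClique (hG.isClique_closedNbhd hu) ⟨u, self_mem_closedNbhd⟩)
  exact hG.eq_closedNbhd hB (hsub self_mem_closedNbhd) hu ▸ hB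

theorem setOf_isBlock_exists_not_isCutVertex (hG : G.IsBlockGraph) :
    {B | G.IsBlock B ∧ ∃ u ∈ B, ¬ G.IsCutVertex u} =
      G.closedNbhd '' {u | ¬ G.IsCutVertex u} := by
  ext B
  constructor
  · rintro ⟨hB, u, hu, hnc⟩
    exact ⟨u, hnc, (hG.eq_closedNbhd hB hu hnc).symm⟩
  · rintro ⟨u, hu, rfl⟩
    exact ⟨hG.isBlock_closedNbhd hu, u, self_mem_closedNbhd, hu⟩

end IsBlockGraph

theorem Walk.dist_add_dist_of_length_eq {p : G.Walk a b} (hp : p.length = G.dist a b)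
    (hy : y ∈ p.support) : G.dist a y + G.dist y b = G.dist a b := by
  classical
  have hlen := congrArg Walk.length (p.take_spec hy)
  rw [Walk.length_append] at hlen
  have h₁ := dist_le (p.takeUntil y hy)
  have h₂ := dist_le (p.dropUntil y hy)
  have h₃ := (p.takeUntil y hy).reachable.dist_triangle_left b
  omega

/-- Geodesics from `r` to two distinct vertices at the same distance, cut at their last common
vertex `c`. -/
theorem Connected.exists_paths_of_dist_eq (hconn : G.Connected) (hab : a ≠ b)
    (hd : G.dist r a = G.dist r b) :
    ∃ (c : V) (q₁ : G.Walk c a) (q₂ : G.Walk c b), q₁.IsPath ∧ q₂.IsPath ∧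
      (∀ y ∈ q₁.support, y ∈ q₂.support → y = c) ∧
      (∀ y ∈ q₁.support, G.dist r y ≤ G.dist r a) ∧
      (∀ y ∈ q₂.support, G.dist r y ≤ G.dist r a) ∧ G.dist r c < G.dist r a := by
  classical
  obtain ⟨p, hp⟩ := hconn.exists_walk_length_eq_dist r a
  obtain ⟨q, hq⟩ := hconn.exists_walk_length_eq_dist r b
  obtain ⟨c, ⟨hcp, hcq⟩, hcmax⟩ := Set.exists_max_image
    {y | y ∈ p.support ∧ y ∈ q.support} (G.dist r)
    ((List.finite_toSet p.support).subset fun _ hy => hy.1)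
    ⟨r, p.start_mem_support, q.start_mem_support⟩
  have hp₁ : (p.dropUntil c hcp).length = G.dist c a :=
    length_eq_dist_of_subwalk hp (p.isSubwalk_dropUntil hcp)
  have hq₁ : (q.dropUntil c hcq).length = G.dist c b :=
    length_eq_dist_of_subwalk hq (q.isSubwalk_dropUntil hcq)
  have hpc := p.dist_add_dist_of_length_eq hp hcp
  have hqc := q.dist_add_dist_of_length_eq hq hcq
  have hca : c ≠ a := by
    rintro rfl
    exact hab (hconn.dist_eq_zero_iff.mp (by omega))
  refine ⟨c, p.dropUntil c hcp, q.dropUntil c hcq, Walk.isPath_of_length_eq_dist _ hp₁,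
    Walk.isPath_of_length_eq_dist _ hq₁, fun y hy₁ hy₂ => ?_, fun y hy => ?_, fun y hy => ?_, ?_⟩
  · -- past `c` both geodesics move away from `r`, and `c` is the farthest common vertex
    have hy := hcmax y ⟨p.support_dropUntil_subset_support hcp hy₁,
      q.support_dropUntil_subset_support hcq hy₂⟩
    have h₁ := (p.dropUntil c hcp).dist_add_dist_of_length_eq hp₁ hy₁
    have h₂ := hconn.dist_triangle (u := r) (v := y) (w := a)
    exact (hconn.dist_eq_zero_iff.mp (by omega)).symm
  · have := p.dist_add_dist_of_length_eq hp (p.support_dropUntil_subset_support hcp hy)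
    omega
  · have := q.dist_add_dist_of_length_eq hq (q.support_dropUntil_subset_support hcq hy)
    omega
  · have : G.dist c a ≠ 0 := fun h => hca (hconn.dist_eq_zero_iff.mp h)
    omega

def IsGate (G : SimpleGraph V) (r : V) (B : Set V) (g : V) : Prop :=
  g ∈ B ∧ ∀ z ∈ B, z ≠ g → G.dist r z = G.dist r g + 1

theorem IsGate.ne_of_neighborSet_subset (hconn : G.Connected) (hg : G.IsGate r B g)
    (hN : G.neighborSet x ⊆ B) (hrx : r ≠ x) : x ≠ g := by
  rintro rfl
  obtain ⟨p, hp⟩ := hconn.exists_walk_length_eq_dist r x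
  have hn : ¬ p.Nil := fun h => hrx h.eq
  have hadj := p.adj_penultimate hn
  have h₁ := hg.2 _ (hN hadj.symm) hadj.ne
  have h₂ := (dist_le p.dropLast).trans_eq p.length_dropLast
  have h₃ := Walk.not_nil_iff_lt_length.mp hn
  omega

theorem IsBlockGraph.exists_isGate (hG : G.IsBlockGraph) (hconn : G.Connected)
    (hB : G.IsBlock B) (r : V) : ∃ g, G.IsGate r B g := by
  set g := Function.argminOn (G.dist r) B (Set.nonempty_coe_sort.mp hB.1.1.nonempty)
  have hgB : g ∈ B := Function.argminOn_mem _ _ _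
  have hmin : ∀ z ∈ B, G.dist r g ≤ G.dist r z := fun z hz => Function.argminOn_le _ _ hz
  refine ⟨g, hgB, fun z hz hzg => ?_⟩
  have hgz : G.Adj g z := hG B hB hgB hz hzg.symm
  have hle := hconn.dist_triangle (u := r) (v := g) (w := z)
  rw [dist_eq_one_iff_adj.mpr hgz] at hle
  refine hle.antisymm (Nat.succ_le_of_lt ((hmin z hz).lt_of_ne fun heq => ?_))
  -- two vertices of `B` nearest to `r`: their geodesics and the edge `g z` form a cycle
  obtain ⟨c, q₁, q₂, hq₁, hq₂, hinter, -, -, hc⟩ := hconn.exists_paths_of_dist_eq hzg.symm heq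
  have hK := isBiconnectedSet_of_paths hq₁ hq₂ hinter hgz (ne_of_apply_ne (G.dist r) hc.ne)
    (ne_of_apply_ne (G.dist r) (hc.trans_eq heq).ne)
  have hKB := hB.subset_of_isBiconnectedSet hK ⟨Or.inl q₁.end_mem_support, hgB⟩
    ⟨Or.inr q₂.end_mem_support, hz⟩ hzg.symm
  exact (hmin c (hKB (Or.inl q₁.start_mem_support))).not_gt hc

theorem IsBlockGraph.eq_of_isGate_of_mem_inter (hG : G.IsBlockGraph) (hconn : G.Connected)
    (hB : G.IsBlock B) (hB' : G.IsBlock B') (hBB' : B ≠ B') (hg : G.IsGate r B g)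
    (hg' : G.IsGate r B' g') (hw : w ∈ B ∩ B') (hwg : w ≠ g) : w = g' := by
  by_contra hwg'
  have hdw := hg.2 w hw.1 hwg
  have hdw' := hg'.2 w hw.2 hwg'
  have hgg' : g ≠ g' := by
    rintro rfl
    exact hBB' (hB.eq_of_mem_inter hB' ⟨hg.1, hg'.1⟩ hw (Ne.symm hwg))
  obtain ⟨c, q₁, q₂, hq₁, hq₂, hinter, hd₁, hd₂, hc⟩ :=
    hconn.exists_paths_of_dist_eq (r := r) hgg' (by omega)
  have hw₁ : w ∉ q₁.support := fun h => by have := hd₁ w h; omega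
  have hw₂ : w ∉ q₂.support := fun h => by have := hd₂ w h; omega
  have hgw : G.Adj g w := hG B hB hg.1 hw.1 (Ne.symm hwg)
  -- the geodesic to `g` extended by the edge `g w`, and the geodesic to `g'`, form a cycle
  have hK := isBiconnectedSet_of_paths (hq₁.concat hw₁ hgw) hq₂ (fun y hy hy₂ => ?_)
    (hG B' hB' hw.2 hg'.1 hwg') (fun h => by subst h; omega) (fun h => by subst h; omega)
  · have hgK : g ∈ {y | y ∈ (q₁.concat hgw).support} ∪ {y | y ∈ q₂.support} := by
      simp [Walk.support_concat]
    have hwK : w ∈ {y | y ∈ (q₁.concat hgw).support} ∪ {y | y ∈ q₂.support} := by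
      simp [Walk.support_concat]
    have hgB' := hB'.subset_of_isBiconnectedSet hK ⟨hwK, hw.2⟩
      ⟨Or.inr q₂.end_mem_support, hg'.1⟩ hwg' hgK
    exact hBB' (hB.eq_of_mem_inter hB' ⟨hg.1, hgB'⟩ hw (Ne.symm hwg))
  · rw [Walk.support_concat, List.mem_append, List.mem_singleton] at hy
    exact hy.elim (hinter y · hy₂) fun h => absurd (h ▸ hy₂) hw₂

theorem IsZeroForcingSet.exists_adj_unique (hS : G.IsZeroForcingSet S) (hF : F.Nonempty)
    (hFS : Disjoint F S) : ∃ w ∉ F, ∃ y ∈ F, G.Adj w y ∧ ∀ y' ∈ F, G.Adj w y' → y' = y := by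
  by_contra! hfort
  obtain ⟨v, hv⟩ := hF
  suffices ∀ x, G.Forced S x → x ∉ F from this v (hS v) hv
  intro x hx
  induction hx with
  | init x hx => exact fun hxF => Set.disjoint_left.mp hFS hxF hx
  | force u x _ hux _ ihu ihrest =>
    intro hxF
    obtain ⟨y', hy'F, huy', hy'x⟩ := hfort u ihu x hxF hux
    exact ihrest y' huy' hy'x hy'F

theorem IsZeroForcingSet.injOn_closedNbhd (hS : G.IsZeroForcingSet S) :
    Set.InjOn G.closedNbhd Sᶜ := by
  intro p hp q hq hpq
  by_contra hne
  obtain ⟨w, hw, t, ht, hwt, huniq⟩ := hS.exists_adj_unique (F := {p, q})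
    (Set.insert_nonempty _ _) (Set.disjoint_left.mpr (by rintro x (rfl | rfl) <;> assumption))
  -- twins with the same closed neighbourhood form a fort
  have hN : ∀ x ∈ ({p, q} : Set V), G.closedNbhd x = G.closedNbhd p := by
    rintro x (rfl | rfl)
    exacts [rfl, hpq.symm]
  have hadj : ∀ x ∈ ({p, q} : Set V), G.Adj w x := fun x hx => by
    have hwx : w ∈ G.closedNbhd x := hN x hx ▸ hN t ht ▸ Or.inr hwt.symm
    exact (hwx.resolve_left fun h => hw (h ▸ hx)).symm
  exact hne ((huniq p (Or.inl rfl) (hadj p (Or.inl rfl))).trans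
    (huniq q (Or.inr rfl) (hadj q (Or.inr rfl))).symm)

theorem IsZeroForcingSet.ncard_neighborSet_inter_le_two [Finite V] (hS : G.IsZeroForcingSet S)
    (hCS : Disjoint C S) (huC : u ∉ C) (hC : ∀ x ∈ C, ∀ z, G.Adj x z → z ∉ C → z = u)
    (hy : y ∈ C) (huy : ∀ z ∈ C, G.Adj u z → z = y) :
    ∀ v ∈ C, (G.neighborSet v ∩ insert u C).ncard ≤ 2 := by
  induction hn : C.ncard using Nat.strong_induction_on generalizing C u y with
  | _ n ih =>
  rcases (C \ {y}).eq_empty_or_nonempty with hC' | hC'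
  · intro v hv
    obtain rfl : v = y := by_contra fun hvy => hC'.subset ⟨hv, hvy⟩
    refine (Set.ncard_le_ncard (t := {u}) ?_).trans (by simp)
    rintro z ⟨hvz, rfl | hz⟩
    · rfl
    · exact absurd hvz (hC'.subset ⟨hz, fun h => G.ne_of_adj hvz h.symm⟩).elim
  -- the only vertex that can force into `C \ {y}` is `y`, so `y` has a unique neighbour `t` there
  obtain ⟨w, hwC', t, htC', hwt, huniq⟩ :=
    hS.exists_adj_unique hC' (hCS.mono_left Set.sdiff_subset)
  obtain rfl : w = y := by
    by_contra hwy
    obtain rfl := hC t htC'.1 w hwt.symm fun h => hwC' ⟨h, hwy⟩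
    exact htC'.2 (huy t htC'.1 hwt)
  have ih' := ih _ (hn ▸ Set.ncard_sdiff_singleton_lt_of_mem hy) (C := C \ {w}) (u := w)
    (y := t) (hCS.mono_left Set.sdiff_subset) (fun h => h.2 rfl) (fun x hx z hxz hz => ?_) htC'
    huniq rfl
  · intro v hv
    by_cases hvw : v = w
    · subst hvw
      refine (Set.ncard_le_ncard (t := {u, t}) ?_).trans
        (Set.ncard_insert_le _ _ |>.trans (by simp))
      rintro z ⟨hvz, rfl | hz⟩
      · exact Or.inl rfl
      · exact Or.inr (huniq z ⟨hz, fun h => G.ne_of_adj hvz h.symm⟩ hvz)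
    · refine (Set.ncard_le_ncard ?_).trans (ih' v ⟨hv, hvw⟩)
      rintro z ⟨hvz, rfl | hz⟩
      · exact absurd (huy v hv hvz.symm) hvw
      · by_cases hzw : z = w
        exacts [⟨hvz, Or.inl hzw⟩, ⟨hvz, Or.inr ⟨hz, hzw⟩⟩]
  · by_contra hzw
    have hzC : z ∉ C := fun h => hz ⟨h, hzw⟩
    obtain rfl := hC x hx.1 z hxz hzC
    exact hx.2 (huy x hx.1 hxz.symm)

theorem IsZeroForcingSet.isPendantPath [Finite V] (hS : G.IsZeroForcingSet S)
    (hC : G.IsCompOfDel {u} C) (hCS : Disjoint C S) : G.IsPendantPath u C := by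
  obtain ⟨hne, hCu, hconn, hclosed⟩ := hC
  have huC : u ∉ C := Set.disjoint_singleton_right.mp hCu
  have hC' : ∀ x ∈ C, ∀ z, G.Adj x z → z ∉ C → z = u := fun x hx z hxz hz =>
    by_contra fun hzu => hz (hclosed x hx z hxz hzu)
  obtain ⟨w, hwC, t, htC, hwt, huniq⟩ := hS.exists_adj_unique hne hCS
  obtain rfl : w = u := hC' t htC w hwt.symm hwC
  have hdeg := hS.ncard_neighborSet_inter_le_two hCS huC hC' htC huniq
  have ht : (G.neighborSet t ∩ C).ncard ≤ 1 := by
    have := hdeg t htC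
    rw [Set.inter_insert_of_mem (show w ∈ G.neighborSet t from hwt.symm),
      Set.ncard_insert_of_notMem fun h => huC h.2] at this
    omega
  refine ⟨⟨hne, hCu, hconn, hclosed⟩, ⟨hne, hconn, fun v hv => ?_, t, htC, ht⟩, t, htC, hwt, ht⟩
  exact (Set.ncard_le_ncard (Set.inter_subset_inter_right _ (Set.subset_insert _ _))).trans
    (hdeg v hv)

theorem exists_isCompOfDel_disjoint (hS : (G.induce S).Connected) (hu : u ∉ S)
    (hcut : G.IsCutVertex u) : ∃ C, G.IsCompOfDel {u} C ∧ Disjoint C S := by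
  classical
  obtain ⟨⟨s₀, hs₀⟩⟩ := hS.nonempty
  have hSwalk : ∀ v ∈ S, ∃ p : G.Walk s₀ v, u ∉ p.support := fun v hv =>
    let ⟨p, _, hp⟩ := Reachable.exists_isPath_of_induce (hS.preconnected ⟨s₀, hs₀⟩ ⟨v, hv⟩)
    ⟨p, fun h => hu (hp h)⟩
  obtain ⟨t, htu, hst⟩ : ∃ t, t ≠ u ∧ ∀ p : G.Walk s₀ t, u ∈ p.support := by
    by_contra! h
    refine hcut (induce_connected_of_walks (a := s₀) (fun h => hu (h ▸ hs₀)) fun v hv => ?_)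
    obtain ⟨p, hp⟩ := h v hv
    exact ⟨p, fun z hz hzu => hp (hzu ▸ hz)⟩
  have htC : ∃ p : G.Walk t t, u ∉ p.support := ⟨.nil, by simpa using htu.symm⟩
  refine ⟨{v | ∃ p : G.Walk t v, u ∉ p.support}, ⟨⟨t, htC⟩, ?_, ?_, ?_⟩, ?_⟩
  · exact Set.disjoint_singleton_right.mpr fun ⟨p, hp⟩ => hp p.end_mem_support
  · refine induce_connected_of_walks htC fun v ⟨p, hp⟩ => ⟨p, fun z hz => ?_⟩
    exact ⟨p.takeUntil z hz, fun h => hp (p.support_takeUntil_subset_support hz h)⟩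
  · rintro v ⟨p, hp⟩ z hvz hz
    refine ⟨p.concat hvz, ?_⟩
    rw [Walk.support_concat, List.mem_append, List.mem_singleton]
    exact fun h => h.elim hp fun h => hz h.symm
  · refine Set.disjoint_left.mpr fun v ⟨p, hp⟩ hv => ?_
    obtain ⟨q, hq⟩ := hSwalk v hv
    have := hst (q.append p.reverse)
    rw [Walk.mem_support_append_iff, Walk.support_reverse, List.mem_reverse] at this
    exact this.elim hq hp

theorem IsConnectedZFS.not_isCutVertex [Finite V] (hS : G.IsConnectedZFS S)
    (hnp : ∀ v P, ¬ G.IsPendantPath v P) (hu : u ∉ S) : ¬ G.IsCutVertex u := fun hcut =>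
  let ⟨C, hC, hCS⟩ := exists_isCompOfDel_disjoint hS.2 hu hcut
  hnp u C (hS.1.isPendantPath hC hCS)

theorem IsConnectedZFS.ncard_compl_le [Finite V] (hS : G.IsConnectedZFS S)
    (hnp : ∀ v P, ¬ G.IsPendantPath v P) :
    Sᶜ.ncard ≤ (G.closedNbhd '' {u | ¬ G.IsCutVertex u}).ncard := by
  rw [← hS.1.injOn_closedNbhd.ncard_image]
  exact Set.ncard_le_ncard (Set.image_mono fun u hu => hS.not_isCutVertex hnp hu)

theorem isPendantPath_singleton (h : G.neighborSet x = {g}) : G.IsPendantPath g {x} := by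
  have hxg : G.Adj x g := by
    rw [← mem_neighborSet, h]
    rfl
  have hconn := (G.isClique_singleton x).induce_connected (Set.singleton_nonempty x)
  have hdeg : (G.neighborSet x ∩ {x}).ncard ≤ 1 := by
    rw [h]
    exact (Set.ncard_le_ncard Set.inter_subset_left).trans (Set.ncard_singleton g).le
  refine ⟨⟨Set.singleton_nonempty x, Set.disjoint_singleton.mpr hxg.ne, hconn, ?_⟩,
    ⟨Set.singleton_nonempty x, hconn, ?_, x, rfl, hdeg⟩, x, rfl, hxg.symm, hdeg⟩
  · rintro _ rfl z hz hzg
    rw [← mem_neighborSet, h] at hz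
    exact absurd hz hzg
  · rintro _ rfl
    omega

theorem exists_adj_ne (hnp : ∀ v P, ¬ G.IsPendantPath v P) (hxg : G.Adj x g) :
    ∃ w, G.Adj x w ∧ w ≠ g := by
  by_contra! h
  exact hnp g {x} (isPendantPath_singleton (Set.eq_singleton_iff_unique_mem.mpr ⟨hxg, h⟩))

theorem Connected.induce_compl_connected (hconn : G.Connected)
    (hT : ∀ x ∈ T, G.IsClique (G.closedNbhd x)) (hr : r ∉ T) : (G.induce Tᶜ).Connected := by
  have hnear : ∀ {x y} (hx : x ∉ T) (hy : y ∉ T), x ∈ G.closedNbhd y →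
      (G.induce Tᶜ).Reachable ⟨x, hx⟩ ⟨y, hy⟩ := by
    rintro x y hx hy (rfl | hxy)
    exacts [Reachable.refl _, Adj.reachable hxy.symm]
  -- a walk can skip each vertex of `T`, whose neighbours are pairwise adjacent
  have key : ∀ {a b} (p : G.Walk a b) (hb : b ∉ T) x (hx : x ∉ T), x ∈ G.closedNbhd a →
      (G.induce Tᶜ).Reachable ⟨x, hx⟩ ⟨b, hb⟩ := by
    intro a b p hb
    induction p with
    | nil => exact fun x hx hxa => hnear hx hb hxa
    | @cons a a₂ b haa₂ p ih =>
      intro x hx hxa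
      by_cases ha : a ∈ T
      · refine ih hb x hx ((eq_or_ne x a₂).imp id fun hne => ?_)
        exact hT a ha (Or.inr haa₂) hxa hne.symm
      · exact (hnear hx ha hxa).trans (ih hb a ha (Or.inr haa₂.symm))
  have : Nonempty (Tᶜ : Set V) := ⟨⟨r, hr⟩⟩
  exact Connected.mk fun x y => key (hconn.preconnected x y).some y.2 x x.2 self_mem_closedNbhd

theorem IsBlockGraph.eq_of_mem_closedNbhd [Finite V] (hG : G.IsBlockGraph)
    (hT : T ⊆ {x | ¬ G.IsCutVertex x}) (hinj : Set.InjOn G.closedNbhd T) (hx : x ∈ T)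
    (hw : w ∈ T) (hwx : w ∈ G.closedNbhd x) : w = x :=
  hinj hw hx (hG.eq_closedNbhd (hG.isBlock_closedNbhd (hT hx)) hwx (hT hw)).symm

theorem IsBlockGraph.forced_of_mem [Fintype V] (hG : G.IsBlockGraph) (hconn : G.Connected)
    (hnp : ∀ v P, ¬ G.IsPendantPath v P) (hT : T ⊆ {x | ¬ G.IsCutVertex x})
    (hinj : Set.InjOn G.closedNbhd T) (hr : r ∉ T) : ∀ x ∈ T, G.Forced Tᶜ x := by
  intro x
  induction x using (measure fun x => Fintype.card V - G.dist r x).wf.induction with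
  | h x ih =>
  intro hx
  have hB := hG.isBlock_closedNbhd (hT hx)
  obtain ⟨g, hg⟩ := hG.exists_isGate hconn hB r
  have hxg : x ≠ g :=
    hg.ne_of_neighborSet_subset hconn (Set.subset_insert _ _) fun h => hr (h ▸ hx)
  obtain ⟨w, hxw, hwg⟩ := exists_adj_ne hnp (hg.1.resolve_left hxg.symm)
  have hwT : w ∉ T := fun hw =>
    hxw.ne (hG.eq_of_mem_closedNbhd hT hinj hx hw (Or.inr hxw)).symm
  refine .force w x (.init w hwT) hxw.symm fun z hwz hzx => ?_
  by_cases hz : z ∈ T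
  · -- `w` is then the gate of the block `N[z]`, so `z` lies farther from `r` than `x`
    have hB' := hG.isBlock_closedNbhd (hT hz)
    obtain ⟨g', hg'⟩ := hG.exists_isGate hconn hB' r
    obtain rfl := hG.eq_of_isGate_of_mem_inter hconn hB hB' (fun h => hzx (hinj hz hx h.symm))
      hg hg' ⟨Or.inr hxw, Or.inr hwz.symm⟩ hwg
    have hzw : z ≠ w :=
      hg'.ne_of_neighborSet_subset hconn (Set.subset_insert _ _) fun h => hr (h ▸ hz)
    have hdz := hg'.2 z self_mem_closedNbhd hzw
    have hdx := hg.2 x self_mem_closedNbhd hxg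
    have hdw := hg.2 w (Or.inr hxw) hwg
    obtain ⟨p, hp, hpx⟩ := hconn.exists_path_of_dist r x
    have hlt := hp.length_lt
    exact ih z (show Fintype.card V - _ < Fintype.card V - _ by omega) hz
  · exact .init z hz

theorem IsBlockGraph.exists_isConnectedZFS [Fintype V] (hG : G.IsBlockGraph)
    (hconn : G.Connected) (hnp : ∀ v P, ¬ G.IsPendantPath v P) :
    ∃ S, G.IsConnectedZFS S ∧ Sᶜ.ncard = (G.closedNbhd '' {u | ¬ G.IsCutVertex u}).ncard := by
  obtain ⟨T, hT, hbij⟩ := Set.exists_subset_bijOn {u | ¬ G.IsCutVertex u} G.closedNbhd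
  obtain ⟨r, hr⟩ : ∃ r, r ∉ T := by
    by_contra! hall
    obtain ⟨v⟩ := hconn.nonempty
    obtain ⟨⟨u, hu⟩⟩ := (not_not.mp (hT (hall v))).nonempty
    obtain ⟨p⟩ := hconn.preconnected v u
    have hadj := p.adj_snd fun h => hu h.eq.symm
    exact hadj.ne (hG.eq_of_mem_closedNbhd hT hbij.injOn (hall v) (hall _) (Or.inr hadj)).symm
  refine ⟨Tᶜ, ⟨fun v => ?_, hconn.induce_compl_connected
    (fun x hx => hG.isClique_closedNbhd (hT hx)) hr⟩, ?_⟩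
  · by_cases hv : v ∈ T
    exacts [hG.forced_of_mem hconn hnp hT hbij.injOn hr v hv, .init v hv]
  · rw [compl_compl, ← hbij.image_eq, hbij.injOn.ncard_image]

end SimpleGraph

/-- For a block graph `G` with no pendant paths, `Z_c(G) = n − b`, where `b` is the number
of blocks containing at least one non-cut vertex. -/
theorem stmt16 {V : Type} [Fintype V] (G : SimpleGraph V) (hG : G.Connected)
    (hblock : ∀ B : Set V, G.IsBlock B → ∀ u ∈ B, ∀ w ∈ B, u ≠ w → G.Adj u w)
    (hnp : ∀ (v : V) (P : Set V), ¬ G.IsPendantPath v P) :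
    G.czfNumber = Fintype.card V -
      {B : Set V | G.IsBlock B ∧ ∃ u ∈ B, ¬ G.IsCutVertex u}.ncard := by
  have hbg : G.IsBlockGraph := fun B hB _ hu _ hw huw => hblock B hB _ hu _ hw huw
  have hcompl (S : Set V) : S.ncard + Sᶜ.ncard = Fintype.card V := by
    rw [Set.ncard_add_ncard_compl, Nat.card_eq_fintype_card]
  rw [hbg.setOf_isBlock_exists_not_isCutVertex]
  obtain ⟨T, hT, hTcard⟩ := hbg.exists_isConnectedZFS hG hnp
  refine le_antisymm (Nat.sInf_le ⟨T, hT, by have := hcompl T; omega⟩)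
    (le_csInf ⟨_, T, hT, rfl⟩ ?_)
  rintro _ ⟨S, hS, rfl⟩
  have := hS.ncard_compl_le hnp
  have := hcompl S
  omega
end
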